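/- arXiv:math/0107145 — 2 statements merged into one kernel-verified Lean document; each statement's English description precedes it below -/
import Mathlib

section
/- For all real numbers X > 1 and Y > 1, ∑_{m≥1} ∑_{n≥1} gcd(m,n)·X^{-m}·Y^{-n} = ∑_{k≥1} φ(k)/((X^k - 1)(Y^k - 1)), and both series converge absolutely. -/
/-!
With `x = X⁻¹`, `y = Y⁻¹`, expand `gcd m n = ∑_{d ∣ gcd m n} φ d` and write `m = d a`, `n = d b`:
the double series becomes `∑_d φ d ∑_{a, b ≥ 1} x^{da} y^{db} = ∑_d φ d · x^d/(1 - x^d) · y^d/(1 - y^d)`.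
All terms are nonnegative, so these rearrangements are justified as soon as the last series
converges, which follows from `φ d ≤ d` and `1 - x^d ≥ 1 - x`.
-/

open Nat

theorem HasSum.mul_of_nonneg {ι κ : Type*} {f : ι → ℝ} {g : κ → ℝ} {s t : ℝ}
    (hf : HasSum f s) (hg : HasSum g t) (hf0 : 0 ≤ f) (hg0 : 0 ≤ g) :
    HasSum (fun p : ι × κ => f p.1 * g p.2) (s * t) :=
  hf.mul hg (hf.summable.mul_of_nonneg hg.summable hf0 hg0)

lemma inv_div_one_sub_inv {K : Type*} [Field K] {a : K} (ha : a ≠ 0) :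
    a⁻¹ / (1 - a⁻¹) = (a - 1)⁻¹ := by
  rw [inv_eq_one_div, one_sub_div ha, div_div_div_cancel_right₀ ha, one_div]

lemma succ_mul_succ_sub_one_add_one (k a : ℕ) : (k + 1) * (a + 1) - 1 + 1 = (k + 1) * (a + 1) :=
  Nat.sub_one_add_one (by positivity)

lemma dvd_succ_of_mem_divisors_gcd_succ {m n d : ℕ} (hd : d ∈ ((m + 1).gcd (n + 1)).divisors) :
    d ∣ m + 1 ∧ d ∣ n + 1 := by
  simpa [Nat.dvd_gcd_iff] using hd

/-- `⟨(m, n), d⟩ ↦ (d, (m + 1) / d, (n + 1) / d)`, with every positive integer `k` encoded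
as `k - 1 : ℕ`. -/
def gcdDivisorsEquiv :
    (Σ p : ℕ × ℕ, {d // d ∈ ((p.1 + 1).gcd (p.2 + 1)).divisors}) ≃ ℕ × ℕ × ℕ where
  toFun q := (q.2 - 1, (q.1.1 + 1) / q.2 - 1, (q.1.2 + 1) / q.2 - 1)
  invFun t := ⟨((t.1 + 1) * (t.2.1 + 1) - 1, (t.1 + 1) * (t.2.2 + 1) - 1), t.1 + 1, by
    rw [Nat.mem_divisors, succ_mul_succ_sub_one_add_one, succ_mul_succ_sub_one_add_one]
    exact ⟨Nat.dvd_gcd (dvd_mul_right _ _) (dvd_mul_right _ _), by positivity⟩⟩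
  left_inv := by
    rintro ⟨⟨m, n⟩, d, hd⟩
    obtain ⟨hdm, hdn⟩ := dvd_succ_of_mem_divisors_gcd_succ hd
    have hd0 : 0 < d := Nat.pos_of_dvd_of_pos hdm m.succ_pos
    have hquot {k : ℕ} (hk : d ∣ k + 1) : (k + 1) / d - 1 + 1 = (k + 1) / d :=
      Nat.sub_one_add_one (Nat.div_pos (Nat.le_of_dvd k.succ_pos hk) hd0).ne'
    refine Sigma.subtype_ext ?_ (Nat.sub_one_add_one hd0.ne')
    simp only [Nat.sub_one_add_one hd0.ne', hquot hdm, hquot hdn, Nat.mul_div_cancel' hdm,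
      Nat.mul_div_cancel' hdn, Nat.add_sub_cancel]
  right_inv := by
    rintro ⟨k, a, b⟩
    simp [succ_mul_succ_sub_one_add_one]

section LambertSeries

variable {x y : ℝ}

lemma hasSum_pow_succ (hx0 : 0 ≤ x) (hx1 : x < 1) :
    HasSum (fun a : ℕ => x ^ (a + 1)) (x / (1 - x)) := by
  rw [div_eq_mul_inv]
  exact ((hasSum_geometric_of_lt_one hx0 hx1).mul_left x).congr_fun fun a => pow_succ' x a

lemma hasSum_pow_succ_mul_pow_succ (hx0 : 0 ≤ x) (hx1 : x < 1) (hy0 : 0 ≤ y) (hy1 : y < 1) :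
    HasSum (fun p : ℕ × ℕ => x ^ (p.1 + 1) * y ^ (p.2 + 1)) (x / (1 - x) * (y / (1 - y))) :=
  (hasSum_pow_succ hx0 hx1).mul_of_nonneg (g := fun b => y ^ (b + 1)) (hasSum_pow_succ hy0 hy1)
    (fun _ => pow_nonneg hx0 _) (fun _ => pow_nonneg hy0 _)

lemma summable_succ_mul_pow_succ (hx0 : 0 ≤ x) (hx1 : x < 1) :
    Summable (fun n : ℕ => ((n : ℝ) + 1) * x ^ (n + 1)) := by
  have h := (hasSum_coe_mul_geometric_of_norm_lt_one
    (by rwa [Real.norm_of_nonneg hx0])).summable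
  simpa only [Nat.cast_add, Nat.cast_one] using (summable_nat_add_iff 1).mpr h

lemma pow_div_one_sub_pow_nonneg (hx0 : 0 ≤ x) (hx1 : x < 1) (n : ℕ) :
    0 ≤ x ^ n / (1 - x ^ n) :=
  div_nonneg (pow_nonneg hx0 n) (sub_nonneg.mpr (pow_le_one₀ hx0 hx1.le))

lemma pow_succ_div_one_sub_pow_succ_le (hx0 : 0 ≤ x) (hx1 : x < 1) (n : ℕ) :
    x ^ (n + 1) / (1 - x ^ (n + 1)) ≤ x ^ (n + 1) / (1 - x) :=
  div_le_div_of_nonneg_left (by positivity) (by linarith)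
    (by linarith [pow_le_of_le_one hx0 hx1.le (by omega : n + 1 ≠ 0)])

noncomputable def totientLambertTerm (x y : ℝ) (k : ℕ) : ℝ :=
  φ (k + 1) * (x ^ (k + 1) / (1 - x ^ (k + 1)) * (y ^ (k + 1) / (1 - y ^ (k + 1))))

lemma totientLambertTerm_nonneg (hx0 : 0 ≤ x) (hx1 : x < 1) (hy0 : 0 ≤ y) (hy1 : y < 1)
    (k : ℕ) : 0 ≤ totientLambertTerm x y k :=
  mul_nonneg (Nat.cast_nonneg _)
    (mul_nonneg (pow_div_one_sub_pow_nonneg hx0 hx1 _) (pow_div_one_sub_pow_nonneg hy0 hy1 _))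

lemma summable_totientLambertTerm (hx0 : 0 ≤ x) (hx1 : x < 1) (hy0 : 0 ≤ y) (hy1 : y < 1) :
    Summable (totientLambertTerm x y) := by
  refine .of_nonneg_of_le (totientLambertTerm_nonneg hx0 hx1 hy0 hy1) (fun k => ?_)
    ((summable_succ_mul_pow_succ (mul_nonneg hx0 hy0) (by nlinarith)).mul_left
      ((1 - x)⁻¹ * (1 - y)⁻¹))
  have hφ : (φ (k + 1) : ℝ) ≤ k + 1 := by exact_mod_cast totient_le (k + 1)
  calc totientLambertTerm x y k
      ≤ (k + 1) * (x ^ (k + 1) / (1 - x) * (y ^ (k + 1) / (1 - y))) := by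
        unfold totientLambertTerm
        gcongr ?_ * (?_ * ?_)
        · exact mul_nonneg (pow_div_one_sub_pow_nonneg hx0 hx1 _)
            (pow_div_one_sub_pow_nonneg hy0 hy1 _)
        · exact pow_div_one_sub_pow_nonneg hy0 hy1 _
        · exact pow_succ_div_one_sub_pow_succ_le hx0 hx1 k
        · exact pow_succ_div_one_sub_pow_succ_le hy0 hy1 k
    _ = (1 - x)⁻¹ * (1 - y)⁻¹ * ((k + 1) * (x * y) ^ (k + 1)) := by ring

lemma hasSum_totient_mul_pow_pow (hx0 : 0 ≤ x) (hx1 : x < 1) (hy0 : 0 ≤ y) (hy1 : y < 1) :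
    HasSum (fun t : ℕ × ℕ × ℕ => (φ (t.1 + 1) : ℝ) *
      ((x ^ (t.1 + 1)) ^ (t.2.1 + 1) * (y ^ (t.1 + 1)) ^ (t.2.2 + 1)))
      (∑' k, totientLambertTerm x y k) := by
  have hslice (k : ℕ) : HasSum (fun p : ℕ × ℕ => (φ (k + 1) : ℝ) *
      ((x ^ (k + 1)) ^ (p.1 + 1) * (y ^ (k + 1)) ^ (p.2 + 1))) (totientLambertTerm x y k) :=
    (hasSum_pow_succ_mul_pow_succ (pow_nonneg hx0 _) (pow_lt_one₀ hx0 hx1 (by omega))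
      (pow_nonneg hy0 _) (pow_lt_one₀ hy0 hy1 (by omega))).mul_left _
  have hsummable : Summable (fun t : ℕ × ℕ × ℕ => (φ (t.1 + 1) : ℝ) *
      ((x ^ (t.1 + 1)) ^ (t.2.1 + 1) * (y ^ (t.1 + 1)) ^ (t.2.2 + 1))) :=
    (summable_prod_of_nonneg fun t => by positivity).mpr ⟨fun k => (hslice k).summable,
      (summable_totientLambertTerm hx0 hx1 hy0 hy1).congr fun k => (hslice k).tsum_eq.symm⟩
  rw [(hsummable.hasSum.prod_fiberwise hslice).tsum_eq]
  exact hsummable.hasSum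

theorem hasSum_gcd_mul_pow_mul_pow (hx0 : 0 ≤ x) (hx1 : x < 1) (hy0 : 0 ≤ y) (hy1 : y < 1) :
    HasSum (fun p : ℕ × ℕ => ((p.1 + 1).gcd (p.2 + 1) : ℝ) * (x ^ (p.1 + 1) * y ^ (p.2 + 1)))
      (∑' k, totientLambertTerm x y k) := by
  have hsigma : HasSum (fun q : Σ p : ℕ × ℕ, {d // d ∈ ((p.1 + 1).gcd (p.2 + 1)).divisors} =>
      (φ q.2 : ℝ) * (x ^ (q.1.1 + 1) * y ^ (q.1.2 + 1))) (∑' k, totientLambertTerm x y k) := by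
    refine gcdDivisorsEquiv.symm.hasSum_iff.mp
      ((hasSum_totient_mul_pow_pow hx0 hx1 hy0 hy1).congr_fun fun t => ?_)
    simp [gcdDivisorsEquiv, succ_mul_succ_sub_one_add_one, pow_mul]
  refine hsigma.sigma fun p => ?_
  have h := Finset.hasSum ((p.1 + 1).gcd (p.2 + 1)).divisors
    fun d => (φ d : ℝ) * (x ^ (p.1 + 1) * y ^ (p.2 + 1))
  rwa [← Finset.sum_mul, ← Nat.cast_sum, Nat.sum_totient] at h

end LambertSeries

theorem stmt_8 (X Y : ℝ) (hX : 1 < X) (hY : 1 < Y) :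
    Summable (fun p : ℕ × ℕ =>
        (Nat.gcd (p.1 + 1) (p.2 + 1) : ℝ) / (X ^ (p.1 + 1) * Y ^ (p.2 + 1))) ∧
    Summable (fun k : ℕ =>
        (Nat.totient (k + 1) : ℝ) / ((X ^ (k + 1) - 1) * (Y ^ (k + 1) - 1))) ∧
    ∑' p : ℕ × ℕ, (Nat.gcd (p.1 + 1) (p.2 + 1) : ℝ) / (X ^ (p.1 + 1) * Y ^ (p.2 + 1)) =
      ∑' k : ℕ, (Nat.totient (k + 1) : ℝ) / ((X ^ (k + 1) - 1) * (Y ^ (k + 1) - 1)) := by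
  have hx0 : 0 ≤ X⁻¹ := by positivity
  have hy0 : 0 ≤ Y⁻¹ := by positivity
  have hx1 : X⁻¹ < 1 := inv_lt_one_of_one_lt₀ hX
  have hy1 : Y⁻¹ < 1 := inv_lt_one_of_one_lt₀ hY
  have hgcd : (fun p : ℕ × ℕ =>
      (Nat.gcd (p.1 + 1) (p.2 + 1) : ℝ) / (X ^ (p.1 + 1) * Y ^ (p.2 + 1))) =
      fun p => (Nat.gcd (p.1 + 1) (p.2 + 1) : ℝ) * (X⁻¹ ^ (p.1 + 1) * Y⁻¹ ^ (p.2 + 1)) := by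
    ext p
    rw [div_eq_mul_inv, mul_inv, inv_pow, inv_pow]
  have htotient : (fun k : ℕ =>
      (Nat.totient (k + 1) : ℝ) / ((X ^ (k + 1) - 1) * (Y ^ (k + 1) - 1))) =
      totientLambertTerm X⁻¹ Y⁻¹ := by
    ext k
    rw [totientLambertTerm, inv_pow, inv_pow, inv_div_one_sub_inv (by positivity),
      inv_div_one_sub_inv (by positivity), div_eq_mul_inv, mul_inv]
  have h := hasSum_gcd_mul_pow_mul_pow hx0 hx1 hy0 hy1
  rw [hgcd, htotient]
  exact ⟨h.summable, summable_totientLambertTerm hx0 hx1 hy0 hy1, h.tsum_eq⟩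
end

section
/- Let a : ℕ → ℂ be a sequence such that for every N ∈ ℕ there exist infinitely many m ∈ ℕ such that |a(m)| > N·|a(m+j)| for every integer j with 1 ≤ |j| ≤ N. Then there are no polynomials p_0, …, p_N ∈ ℂ[t], not all zero, with ∑_{k=0}^{N} p_k(n)·a(n+k) = 0 for all n ∈ ℕ. -/
/-!
Let `p_{k₀}` have maximal degree among the nonzero `p_k`, so that eventually
`∑ₖ |p_k(n)| ≤ C |p_{k₀}(n)|` and `p_{k₀}(n) ≠ 0`. Take a spike `m` for a level `M > max(C, N)`
and read the recurrence at `n = m - k₀`: the term `p_{k₀}(n) a(m)` must cancel the others, each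
of which is at most `|p_k(n)| |a(m)| / M`. Hence `M |p_{k₀}(n)| ≤ ∑ₖ |p_k(n)| ≤ C |p_{k₀}(n)|`,
a contradiction.
-/

open Filter Polynomial Asymptotics Finset

theorem norm_le_sum_norm_erase_of_sum_eq_zero {ι E : Type*} [DecidableEq ι]
    [SeminormedAddCommGroup E] {s : Finset ι} {x : ι → E} (hs : ∑ k ∈ s, x k = 0) {i : ι}
    (hi : i ∈ s) : ‖x i‖ ≤ ∑ k ∈ s.erase i, ‖x k‖ := by
  rw [← add_sum_erase s x hi, add_eq_zero_iff_eq_neg] at hs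
  rw [hs, norm_neg]
  exact norm_sum_le _ _

def IsSpike {E : Type*} [SeminormedAddCommGroup E] (a : ℕ → E) (N m : ℕ) : Prop :=
  ∀ j : ℤ, 1 ≤ |j| → |j| ≤ N → 0 ≤ (m : ℤ) + j → (N : ℝ) * ‖a ((m : ℤ) + j).toNat‖ < ‖a m‖

namespace IsSpike

variable {E : Type*} [SeminormedAddCommGroup E] {a : ℕ → E} {N m : ℕ}

theorem lt_of_ne (h : IsSpike a N m) {i : ℕ} (hi : i ≠ m) (hiN : |(i : ℤ) - m| ≤ N) :
    N * ‖a i‖ < ‖a m‖ := by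
  have hj : 1 ≤ |(i : ℤ) - m| := Int.one_le_abs (sub_ne_zero.2 (by exact_mod_cast hi))
  simpa using h _ hj hiN (by omega)

theorem norm_pos (h : IsSpike a N m) (hN : N ≠ 0) : 0 < ‖a m‖ :=
  (mul_nonneg (Nat.cast_nonneg N) (norm_nonneg _)).trans_lt
    (h.lt_of_ne (i := m + 1) (by omega) (by simpa using Nat.one_le_iff_ne_zero.2 hN))

theorem mul_norm_le_sum_norm {R : Type*} [NormedRing R] [NormMulClass R] {a : ℕ → R}
    {M m N k₀ n : ℕ} (hm : IsSpike a M m) (hNM : N ≤ M) (hk₀ : k₀ ∈ range (N + 1))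
    (hn : n + k₀ = m) (c : ℕ → R) (hrel : ∑ k ∈ range (N + 1), c k * a (n + k) = 0) :
    M * ‖c k₀‖ ≤ ∑ k ∈ range (N + 1), ‖c k‖ := by
  rcases eq_or_ne M 0 with rfl | hM
  · simpa using sum_nonneg fun k _ => norm_nonneg (c k)
  refine le_of_mul_le_mul_right ?_ (hm.norm_pos hM)
  calc M * ‖c k₀‖ * ‖a m‖ = M * ‖c k₀ * a (n + k₀)‖ := by rw [norm_mul, hn]; ring
    _ ≤ M * ∑ k ∈ (range (N + 1)).erase k₀, ‖c k * a (n + k)‖ :=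
        mul_le_mul_of_nonneg_left (norm_le_sum_norm_erase_of_sum_eq_zero hrel hk₀) M.cast_nonneg
    _ = ∑ k ∈ (range (N + 1)).erase k₀, ‖c k‖ * (M * ‖a (n + k)‖) := by
        rw [mul_sum]; exact sum_congr rfl fun k _ => by rw [norm_mul]; ring
    _ ≤ ∑ k ∈ (range (N + 1)).erase k₀, ‖c k‖ * ‖a m‖ := by
        refine sum_le_sum fun k hk => mul_le_mul_of_nonneg_left (hm.lt_of_ne ?_ ?_).le ?_
        · have := ne_of_mem_erase hk; omega
        · have := mem_range.1 (mem_of_mem_erase hk); have := mem_range.1 hk₀; rw [abs_le]; omega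
        · positivity
    _ ≤ (∑ k ∈ range (N + 1), ‖c k‖) * ‖a m‖ := by
        rw [← sum_mul]; gcongr
        exact erase_subset _ _

end IsSpike

theorem Polynomial.exists_max_degree_ne_zero {R ι : Type*} [Semiring R] {s : Finset ι}
    {p : ι → R[X]} (hp : ∃ k ∈ s, p k ≠ 0) :
    ∃ k₀ ∈ s, p k₀ ≠ 0 ∧ ∀ k ∈ s, (p k).degree ≤ (p k₀).degree := by
  obtain ⟨k, hks, hk⟩ := hp
  obtain ⟨k₀, hk₀, hmax⟩ := s.exists_max_image (fun k => (p k).degree) ⟨k, hks⟩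
  refine ⟨k₀, hk₀, fun h => hk ?_, hmax⟩
  simpa [h] using hmax k hks

theorem Polynomial.exists_sum_norm_eval_natCast_le {R ι : Type*} [NormedRing R] [NormMulClass R]
    [NormSMulClass ℤ R] [Nontrivial R] {s : Finset ι} {p : ι → R[X]} {Q : R[X]}
    (h : ∀ k ∈ s, (p k).degree ≤ Q.degree) :
    ∃ C : ℝ, ∀ᶠ n : ℕ in atTop, ∑ k ∈ s, ‖(p k).eval (n : R)‖ ≤ C * ‖Q.eval (n : R)‖ := by
  have hO : (fun n : ℕ => ∑ k ∈ s, ‖(p k).eval (n : R)‖) =O[atTop] fun n => Q.eval (n : R) :=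
    IsBigO.fun_sum fun k hk => IsBigO.norm_left <|
      (isBigO_cobounded_of_degree_le (h k hk)).comp_tendsto tendsto_natCast_atTop_cobounded
  obtain ⟨C, hC⟩ := hO.bound
  refine ⟨C, hC.mono fun n hn => ?_⟩
  rwa [Real.norm_of_nonneg (sum_nonneg fun k _ => norm_nonneg _)] at hn

theorem Polynomial.eventually_eval_natCast_ne_zero {R : Type*} [CommRing R] [IsDomain R]
    [CharZero R] {P : R[X]} (hP : P ≠ 0) : ∀ᶠ n : ℕ in atTop, P.eval (n : R) ≠ 0 :=
  Nat.cofinite_eq_atTop ▸ Nat.cast_injective.tendsto_cofinite.eventually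
    (eventually_cofinite_not_isRoot hP)

theorem stmt_12 (a : ℕ → ℂ)
    (ha : ∀ N : ℕ, {m : ℕ | ∀ j : ℤ, 1 ≤ |j| → |j| ≤ N → 0 ≤ (m : ℤ) + j →
        (N : ℝ) * ‖a ((m : ℤ) + j).toNat‖ < ‖a m‖}.Infinite) :
    ¬ ∃ (N : ℕ) (p : ℕ → Polynomial ℂ),
        (∃ k ≤ N, p k ≠ 0) ∧
        ∀ n : ℕ, ∑ k ∈ Finset.range (N + 1), (p k).eval (n : ℂ) * a (n + k) = 0 := by
  rintro ⟨N, p, ⟨k, hkN, hk⟩, hrec⟩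
  obtain ⟨k₀, hk₀s, hk₀, hdeg⟩ :=
    exists_max_degree_ne_zero (s := range (N + 1)) ⟨k, mem_range.2 (by omega), hk⟩
  obtain ⟨C, hC⟩ := exists_sum_norm_eval_natCast_le hdeg
  obtain ⟨n₀, hn₀⟩ := eventually_atTop.1 (hC.and (eventually_eval_natCast_ne_zero hk₀))
  obtain ⟨M, hM⟩ := exists_nat_gt (max C N)
  obtain ⟨m, hm : IsSpike a M m, hmn₀⟩ := (ha M).exists_gt (n₀ + k₀)
  obtain ⟨hsum, hne⟩ := hn₀ (m - k₀) (by omega)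
  have hspike : M * ‖(p k₀).eval ((m - k₀ : ℕ) : ℂ)‖ ≤ C * ‖(p k₀).eval ((m - k₀ : ℕ) : ℂ)‖ :=
    (hm.mul_norm_le_sum_norm (by exact_mod_cast (le_max_right C N).trans hM.le) hk₀s
      (by omega) _ (hrec (m - k₀))).trans hsum
  have hCM : C < M := (le_max_left C N).trans_lt hM
  exact hCM.not_ge (le_of_mul_le_mul_right hspike (norm_pos_iff.2 hne))
end
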